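/- arXiv:2509.00719 — 2 statements merged into one kernel-verified Lean document; each statement's English description precedes it below -/
import Mathlib

section
/- (Augmentation bound, Lemma 1.) Let n ≥ m be an integer, let w*_n be a D-optimal exact design of size n with invertible information matrix, let ℓ be a support index of w*_n, let w⁺_n be any exact design of size n, and let 𝐍 be any m×m positive definite real matrix. Then f_ℓᵀ 𝐍⁻¹ f_ℓ ≥ m·n·Φ(M(w⁺_n))/Φ(𝐍) − (n−1)·max_{i∈{1,…,N}} f_iᵀ 𝐍⁻¹ f_i. -/
open Matrix BigOperators

/-- An approximate design: nonnegative weights summing to one. -/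
def IsDesign {N : ℕ} (w : Fin N → ℝ) : Prop :=
  (∀ i, 0 ≤ w i) ∧ ∑ i, w i = 1

/-- An exact design of size `n`: an approximate design with `n * w i` an integer for all `i`. -/
def IsExactDesign {N : ℕ} (n : ℕ) (w : Fin N → ℝ) : Prop :=
  IsDesign w ∧ ∀ i, ∃ z : ℤ, (n : ℝ) * w i = (z : ℝ)

/-- The information matrix `M(w) = ∑ i, w i • f i (f i)ᵀ`. -/
noncomputable def infoMatrix {N m : ℕ} (f : Fin N → Fin m → ℝ) (w : Fin N → ℝ) :
    Matrix (Fin m) (Fin m) ℝ :=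
  ∑ i, w i • vecMulVec (f i) (f i)

/-- The D-criterion `Φ(M) = det(M)^(1/m)`. -/
noncomputable def Dcrit {m : ℕ} (M : Matrix (Fin m) (Fin m) ℝ) : ℝ :=
  M.det ^ ((1 : ℝ) / (m : ℝ))

/-- A D-optimal approximate design. -/
def IsDOptimalApprox {N m : ℕ} (f : Fin N → Fin m → ℝ) (w : Fin N → ℝ) : Prop :=
  IsDesign w ∧ ∀ w' : Fin N → ℝ, IsDesign w' →
    Dcrit (infoMatrix f w') ≤ Dcrit (infoMatrix f w)

/-- A D-optimal exact design of size `n`. -/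
def IsDOptimalExact {N m : ℕ} (f : Fin N → Fin m → ℝ) (n : ℕ) (w : Fin N → ℝ) : Prop :=
  IsExactDesign n w ∧ ∀ w' : Fin N → ℝ, IsExactDesign n w' →
    Dcrit (infoMatrix f w') ≤ Dcrit (infoMatrix f w)

/-- The variance function `v_i(w) = f iᵀ M(w)⁻¹ f i`. -/
noncomputable def varfun {N m : ℕ} (f : Fin N → Fin m → ℝ) (w : Fin N → ℝ) (i : Fin N) : ℝ :=
  f i ⬝ᵥ (infoMatrix f w)⁻¹ *ᵥ f i


section AuxLemmas

open Finset

private lemma vecMulVec_psd {m : ℕ} (v : Fin m → ℝ) : (vecMulVec v v).PosSemidef := by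
  refine posSemidef_iff_dotProduct_mulVec.mpr ⟨?_, ?_⟩
  · ext i j
    simp [vecMulVec_apply, conjTranspose_apply, mul_comm]
  · intro x
    have h : vecMulVec v v *ᵥ x = (v ⬝ᵥ x) • v := by
      ext i
      simp only [mulVec, vecMulVec_apply, dotProduct, Pi.smul_apply, smul_eq_mul,
        Finset.mul_sum]
      rw [Finset.sum_mul]
      exact Finset.sum_congr rfl fun j _ => by ring
    rw [h, dotProduct_smul, star_trivial, smul_eq_mul, dotProduct_comm]
    exact mul_self_nonneg _

private lemma infoMatrix_psd {N m : ℕ} (f : Fin N → Fin m → ℝ) {w : Fin N → ℝ}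
    (hw : ∀ i, 0 ≤ w i) : (infoMatrix f w).PosSemidef := by
  unfold infoMatrix
  refine Finset.sum_induction _ _ (fun a b ha hb => ha.add hb) .zero ?_
  intro i _
  refine posSemidef_iff_dotProduct_mulVec.mpr ⟨?_, ?_⟩
  · ext a b
    simp only [conjTranspose_apply, star_trivial, Matrix.smul_apply, vecMulVec_apply,
      smul_eq_mul]
    ring
  · intro x
    simp only [smul_mulVec, dotProduct_smul, smul_eq_mul]
    exact mul_nonneg (hw i) ((vecMulVec_psd (f i)).dotProduct_mulVec_nonneg x)

private lemma trace_mul_infoMatrix {N m : ℕ} (X : Matrix (Fin m) (Fin m) ℝ)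
    (f : Fin N → Fin m → ℝ) (w : Fin N → ℝ) :
    (X * infoMatrix f w).trace = ∑ i, w i * (f i ⬝ᵥ X *ᵥ f i) := by
  unfold infoMatrix
  rw [Matrix.mul_sum, trace_sum]
  refine Finset.sum_congr rfl fun i _ => ?_
  rw [Matrix.mul_smul, trace_smul, smul_eq_mul]
  congr 1
  simp only [Matrix.trace, Matrix.diag, Matrix.mul_apply, vecMulVec_apply, dotProduct, mulVec,
    Finset.mul_sum]
  exact Finset.sum_congr rfl fun a _ => Finset.sum_congr rfl fun j _ => by ring

private lemma psd_det_nonneg {m : ℕ} {A : Matrix (Fin m) (Fin m) ℝ} (hA : A.PosSemidef) :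
    0 ≤ A.det := by
  rw [show A.det = ∏ i, hA.1.eigenvalues i from by simpa using hA.1.det_eq_prod_eigenvalues]
  exact Finset.prod_nonneg fun i _ => hA.eigenvalues_nonneg i

private lemma trace_eq_sum_eigs' {m : ℕ} {B : Matrix (Fin m) (Fin m) ℝ}
    (hB : B.IsHermitian) : B.trace = ∑ i, hB.eigenvalues i := by
  simpa using hB.trace_eq_sum_eigenvalues

private lemma amgm_trace_det {m : ℕ} (hm : 0 < m) {B : Matrix (Fin m) (Fin m) ℝ}
    (hB : B.PosSemidef) : (m : ℝ) * B.det ^ ((1:ℝ)/(m:ℝ)) ≤ B.trace := by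
  have hmR : (0:ℝ) < m := Nat.cast_pos.mpr hm
  have hev : ∀ i, 0 ≤ hB.1.eigenvalues i := hB.eigenvalues_nonneg
  have hdet : B.det = ∏ i, hB.1.eigenvalues i := by
    simpa using hB.1.det_eq_prod_eigenvalues
  have htr : B.trace = ∑ i, hB.1.eigenvalues i := trace_eq_sum_eigs' hB.1
  have key : (∏ i, hB.1.eigenvalues i) ^ ((1:ℝ)/(m:ℝ))
      ≤ ∑ i : Fin m, (1/(m:ℝ)) * hB.1.eigenvalues i := by
    rw [← Real.finset_prod_rpow _ _ (fun i _ => hev i)]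
    exact Real.geom_mean_le_arith_mean_weighted Finset.univ (fun _ => 1/(m:ℝ)) _
      (fun i _ => by positivity)
      (by simp only [Finset.sum_const, Finset.card_univ, Fintype.card_fin, nsmul_eq_mul]
          field_simp)
      (fun i _ => hev i)
  rw [hdet, htr]
  calc (m:ℝ) * (∏ i, hB.1.eigenvalues i) ^ ((1:ℝ)/(m:ℝ))
      ≤ (m:ℝ) * ∑ i : Fin m, (1/(m:ℝ)) * hB.1.eigenvalues i :=
        mul_le_mul_of_nonneg_left key hmR.le
    _ = ∑ i, hB.1.eigenvalues i := by
        rw [← Finset.mul_sum, ← mul_assoc]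
        field_simp

open scoped MatrixOrder in
private lemma key_ineq {m : ℕ} (hm : 0 < m) {A Nm : Matrix (Fin m) (Fin m) ℝ}
    (hA : A.PosSemidef) (hN : Nm.PosDef) :
    (m : ℝ) * (A.det ^ ((1:ℝ)/(m:ℝ)) / Nm.det ^ ((1:ℝ)/(m:ℝ))) ≤ (Nm⁻¹ * A).trace := by
  have hNi : (Nm⁻¹).PosDef := hN.inv
  set S := CFC.sqrt (Nm⁻¹) with hS
  have hSpsd : S.PosSemidef := (CFC.sqrt_nonneg _).posSemidef
  have hSS : S * S = Nm⁻¹ := CFC.sqrt_mul_sqrt_self _ hNi.posSemidef.nonneg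
  have hBpsd : (S * A * S).PosSemidef := by
    have h := hA.mul_mul_conjTranspose_same S
    rwa [hSpsd.isHermitian.eq] at h
  have htr : (S * A * S).trace = (Nm⁻¹ * A).trace := by
    rw [trace_mul_comm, ← mul_assoc, hSS]
  have hdet : (S * A * S).det = A.det / Nm.det := by
    rw [det_mul, det_mul]
    have h1 : S.det * S.det = Nm.det⁻¹ := by
      rw [← det_mul, hSS, det_nonsing_inv, Ring.inverse_eq_inv]
    have h2 : S.det * A.det * S.det = A.det * (S.det * S.det) := by ring
    rw [h2, h1, div_eq_mul_inv]
  have hmain := amgm_trace_det hm hBpsd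
  rw [hdet, htr, Real.div_rpow (psd_det_nonneg hA) hN.det_pos.le] at hmain
  exact hmain

end AuxLemmas

theorem augmentation_bound {m N : ℕ} (hm : 2 ≤ m) (hN : 2 ≤ N) (f : Fin N → Fin m → ℝ)
    (n : ℕ) (hn : m ≤ n)
    (hex : ∃ w : Fin N → ℝ, IsExactDesign n w ∧ (infoMatrix f w).det ≠ 0)
    (wopt : Fin N → ℝ) (hopt : IsDOptimalExact f n wopt)
    (hoptns : (infoMatrix f wopt).det ≠ 0)
    (ℓ : Fin N) (hℓ : 0 < wopt ℓ)
    (wplus : Fin N → ℝ) (hplus : IsExactDesign n wplus)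
    (Nmat : Matrix (Fin m) (Fin m) ℝ) (hNmat : Nmat.PosDef) :
    f ℓ ⬝ᵥ Nmat⁻¹ *ᵥ f ℓ ≥
      (m : ℝ) * (n : ℝ) * (Dcrit (infoMatrix f wplus) / Dcrit Nmat)
        - ((n : ℝ) - 1) * ⨆ i, f i ⬝ᵥ Nmat⁻¹ *ᵥ f i := by
  obtain ⟨⟨⟨hw0, hw1⟩, hwint⟩, hoptmax⟩ := hopt
  have hm0 : 0 < m := lt_of_lt_of_le two_pos hm
  have hn0 : (0:ℝ) < (n:ℝ) := Nat.cast_pos.mpr (lt_of_lt_of_le hm0 hn)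
  have hNE : Nonempty (Fin N) := ⟨⟨0, by omega⟩⟩
  set v : Fin N → ℝ := fun i => f i ⬝ᵥ Nmat⁻¹ *ᵥ f i with hv
  have hvV : ∀ i, v i ≤ ⨆ j, v j := fun i =>
    le_ciSup (Set.Finite.bddAbove (Set.finite_range v)) i
  have hMpsd := infoMatrix_psd f hw0
  have hkey : (m:ℝ) * (Dcrit (infoMatrix f wopt) / Dcrit Nmat) ≤ ∑ i, wopt i * v i := by
    have h := key_ineq hm0 hMpsd hNmat
    rwa [trace_mul_infoMatrix] at h
  have hDN : 0 < Dcrit Nmat := Real.rpow_pos_of_pos hNmat.det_pos _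
  have hle : Dcrit (infoMatrix f wplus) ≤ Dcrit (infoMatrix f wopt) := hoptmax wplus hplus
  have h4 : (m:ℝ) * (n:ℝ) * (Dcrit (infoMatrix f wplus) / Dcrit Nmat)
      ≤ (m:ℝ) * (n:ℝ) * (Dcrit (infoMatrix f wopt) / Dcrit Nmat) := by
    gcongr
  have h3 : (m:ℝ) * (n:ℝ) * (Dcrit (infoMatrix f wopt) / Dcrit Nmat)
      ≤ ∑ i, ((n:ℝ) * wopt i) * v i := by
    calc (m:ℝ) * (n:ℝ) * (Dcrit (infoMatrix f wopt) / Dcrit Nmat)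
        = (n:ℝ) * ((m:ℝ) * (Dcrit (infoMatrix f wopt) / Dcrit Nmat)) := by ring
      _ ≤ (n:ℝ) * ∑ i, wopt i * v i := mul_le_mul_of_nonneg_left hkey hn0.le
      _ = ∑ i, ((n:ℝ) * wopt i) * v i := by
          rw [Finset.mul_sum]
          exact Finset.sum_congr rfl fun i _ => by ring
  have hcl : 1 ≤ (n:ℝ) * wopt ℓ := by
    obtain ⟨z, hz⟩ := hwint ℓ
    have hpos : (0:ℝ) < (n:ℝ) * wopt ℓ := mul_pos hn0 hℓ
    rw [hz] at hpos ⊢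
    have : (0:ℤ) < z := by exact_mod_cast hpos
    exact_mod_cast this
  have hsumw : ∑ i, (n:ℝ) * wopt i = (n:ℝ) := by
    rw [← Finset.mul_sum, hw1, mul_one]
  have hsum : ∑ i, ((n:ℝ) * wopt i) * v i ≤ v ℓ + ((n:ℝ) - 1) * ⨆ j, v j := by
    have hsplit : ∑ i, ((n:ℝ) * wopt i) * v i
        = ((n:ℝ) * wopt ℓ) * v ℓ + ∑ i ∈ Finset.univ.erase ℓ, ((n:ℝ) * wopt i) * v i :=
      (Finset.add_sum_erase _ _ (Finset.mem_univ ℓ)).symm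
    have herase : ∑ i ∈ Finset.univ.erase ℓ, ((n:ℝ) * wopt i) * v i
        ≤ ((n:ℝ) - (n:ℝ) * wopt ℓ) * ⨆ j, v j := by
      have h1 : ∑ i ∈ Finset.univ.erase ℓ, ((n:ℝ) * wopt i) * v i
          ≤ ∑ i ∈ Finset.univ.erase ℓ, ((n:ℝ) * wopt i) * ⨆ j, v j := by
        refine Finset.sum_le_sum fun i _ => ?_
        exact mul_le_mul_of_nonneg_left (hvV i) (mul_nonneg hn0.le (hw0 i))
      have h2 : ∑ i ∈ Finset.univ.erase ℓ, ((n:ℝ) * wopt i) * ⨆ j, v j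
          = ((n:ℝ) - (n:ℝ) * wopt ℓ) * ⨆ j, v j := by
        rw [← Finset.sum_mul, Finset.sum_erase_eq_sub (Finset.mem_univ ℓ), hsumw]
      rw [h2] at h1
      exact h1
    have hℓbound : ((n:ℝ) * wopt ℓ) * v ℓ ≤ v ℓ + ((n:ℝ) * wopt ℓ - 1) * ⨆ j, v j := by
      have := mul_le_mul_of_nonneg_left (hvV ℓ) (by linarith : (0:ℝ) ≤ (n:ℝ) * wopt ℓ - 1)
      nlinarith [this]
    rw [hsplit]
    nlinarith [herase, hℓbound]
  have : v ℓ ≥ (m:ℝ) * (n:ℝ) * (Dcrit (infoMatrix f wplus) / Dcrit Nmat)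
      - ((n:ℝ) - 1) * ⨆ j, v j := by linarith
  exact this
end

section
/- (Lemma 2, trace lower bound.) Let m ≥ 2, let v, z ∈ ℝ^m, let B be an m×m positive semidefinite real matrix, and let γ₁ and γ_m be the smallest and largest eigenvalues of B, respectively. Then tr(B(vvᵀ − zzᵀ)) ≥ γ₁·Δ(v,z) − γ_m·Δ(z,v). -/
open Matrix BigOperators

/-- The Euclidean norm of a vector in `ℝ^m`. -/
noncomputable def eucNorm {m : ℕ} (v : Fin m → ℝ) : ℝ :=
  Real.sqrt (∑ i, v i ^ 2)

/-- The discrepancy `Δ(v,z) = (‖v+z‖‖v−z‖ + ‖v‖² − ‖z‖²)/2` (Euclidean norms). -/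
noncomputable def disc {m : ℕ} (v z : Fin m → ℝ) : ℝ :=
  (eucNorm (v + z) * eucNorm (v - z) + eucNorm v ^ 2 - eucNorm z ^ 2) / 2

private lemma trace_mul_vecMulVec {m : ℕ} (B : Matrix (Fin m) (Fin m) ℝ) (v : Fin m → ℝ) :
    (B * vecMulVec v v).trace = v ⬝ᵥ B *ᵥ v := by
  simp only [Matrix.trace, Matrix.diag_apply, Matrix.mul_apply, Matrix.vecMulVec_apply,
    dotProduct, Matrix.mulVec, Finset.mul_sum]
  congr 1; ext i; congr 1; ext j; ring

private lemma quadform_eq {m : ℕ} (B : Matrix (Fin m) (Fin m) ℝ) (hB : B.PosSemidef)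
    (v : Fin m → ℝ) :
    v ⬝ᵥ B *ᵥ v = ∑ i, hB.1.eigenvalues i *
      ((star (hB.1.eigenvectorUnitary : Matrix (Fin m) (Fin m) ℝ)) *ᵥ v) i ^ 2 := by
  set U : Matrix (Fin m) (Fin m) ℝ := (hB.1.eigenvectorUnitary : Matrix (Fin m) (Fin m) ℝ)
  conv_lhs => rw [hB.1.spectral_theorem, Unitary.conjStarAlgAut_apply]
  set a := (star U) *ᵥ v with ha
  have h1 : (U * diagonal (RCLike.ofReal ∘ hB.1.eigenvalues) * star U) *ᵥ v
      = U *ᵥ (diagonal (RCLike.ofReal ∘ hB.1.eigenvalues) *ᵥ a) := by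
    rw [← Matrix.mulVec_mulVec, ← Matrix.mulVec_mulVec]
  rw [h1, Matrix.dotProduct_mulVec]
  have h2 : Matrix.vecMul v U = a := by
    rw [ha, ← Matrix.mulVec_transpose]
    congr 1
  rw [h2]
  simp [dotProduct, Matrix.mulVec_diagonal, pow_two]
  exact Finset.sum_congr rfl fun i _ => by ring

private lemma norm_preserved {m : ℕ} (B : Matrix (Fin m) (Fin m) ℝ) (hB : B.PosSemidef)
    (w : Fin m → ℝ) :
    ∑ i, ((star (hB.1.eigenvectorUnitary : Matrix (Fin m) (Fin m) ℝ)) *ᵥ w) i ^ 2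
      = ∑ i, w i ^ 2 := by
  set U : Matrix (Fin m) (Fin m) ℝ := (hB.1.eigenvectorUnitary : Matrix (Fin m) (Fin m) ℝ)
  have hUU : U * star U = 1 := Matrix.mem_unitaryGroup_iff.mp (hB.1.eigenvectorUnitary).2
  have h1 : ((star U) *ᵥ w) ⬝ᵥ ((star U) *ᵥ w) = w ⬝ᵥ w := by
    rw [Matrix.dotProduct_mulVec, ← Matrix.mulVec_transpose, Matrix.mulVec_mulVec]
    have hsU : (star U)ᵀ = U := by
      have h : star U = Uᵀ := by
        simp [Matrix.star_eq_conjTranspose, Matrix.conjTranspose_eq_transpose_of_trivial]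
      rw [h, Matrix.transpose_transpose]
    rw [hsU, hUU, Matrix.one_mulVec]
  simpa [dotProduct, pow_two] using h1

theorem trace_lower_bound {m : ℕ} (hm : 2 ≤ m) (v z : Fin m → ℝ)
    (B : Matrix (Fin m) (Fin m) ℝ) (hB : B.PosSemidef) :
    (B * (vecMulVec v v - vecMulVec z z)).trace ≥
      (⨅ i, hB.1.eigenvalues i) * disc v z - (⨆ i, hB.1.eigenvalues i) * disc z v := by
  have hne : Nonempty (Fin m) := Fin.pos_iff_nonempty.mp (by omega)
  set γ : Fin m → ℝ := hB.1.eigenvalues with hγ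
  set U : Matrix (Fin m) (Fin m) ℝ := (hB.1.eigenvectorUnitary : Matrix (Fin m) (Fin m) ℝ)
    with hU
  set a : Fin m → ℝ := (star U) *ᵥ v with ha
  set b : Fin m → ℝ := (star U) *ᵥ z with hb
  set γ₁ : ℝ := ⨅ i, γ i with hγ₁
  set γm : ℝ := ⨆ i, γ i with hγm
  have hlo : ∀ i, γ₁ ≤ γ i := fun i => ciInf_le (Finite.bddBelow_range _) i
  have hhi : ∀ i, γ i ≤ γm := fun i => le_ciSup (Finite.bddAbove_range _) i
  -- rewrite the trace
  have htr : (B * (vecMulVec v v - vecMulVec z z)).trace = ∑ i, γ i * (a i ^ 2 - b i ^ 2) := by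
    rw [Matrix.mul_sub, Matrix.trace_sub, trace_mul_vecMulVec, trace_mul_vecMulVec,
      quadform_eq B hB v, quadform_eq B hB z]
    rw [← Finset.sum_sub_distrib]
    exact Finset.sum_congr rfl fun i _ => by rw [← hU, ← ha, ← hb]; ring
  -- norms
  have hNv : ∑ i, a i ^ 2 = ∑ i, v i ^ 2 := norm_preserved B hB v
  have hNz : ∑ i, b i ^ 2 = ∑ i, z i ^ 2 := norm_preserved B hB z
  have hab_add : ∀ i, a i + b i = ((star U) *ᵥ (v + z)) i := by
    intro i; rw [Matrix.mulVec_add]; rfl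
  have hab_sub : ∀ i, a i - b i = ((star U) *ᵥ (v - z)) i := by
    intro i; rw [Matrix.mulVec_sub]; rfl
  have hNadd : ∑ i, (a i + b i) ^ 2 = ∑ i, (v i + z i) ^ 2 := by
    calc ∑ i, (a i + b i) ^ 2 = ∑ i, ((star U) *ᵥ (v + z)) i ^ 2 := by
          exact Finset.sum_congr rfl fun i _ => by rw [hab_add]
      _ = ∑ i, (v + z) i ^ 2 := norm_preserved B hB (v + z)
      _ = ∑ i, (v i + z i) ^ 2 := rfl
  have hNsub : ∑ i, (a i - b i) ^ 2 = ∑ i, (v i - z i) ^ 2 := by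
    calc ∑ i, (a i - b i) ^ 2 = ∑ i, ((star U) *ᵥ (v - z)) i ^ 2 := by
          exact Finset.sum_congr rfl fun i _ => by rw [hab_sub]
      _ = ∑ i, (v - z) i ^ 2 := norm_preserved B hB (v - z)
      _ = ∑ i, (v i - z i) ^ 2 := rfl
  -- discrepancy values
  set P : ℝ := eucNorm (v + z) * eucNorm (v - z) with hP
  set S : ℝ := ∑ i, |a i ^ 2 - b i ^ 2| with hS
  set D : ℝ := ∑ i, (a i ^ 2 - b i ^ 2) with hD
  have hSP : S ≤ P := by
    have h1 : S = ∑ i, |a i + b i| * |a i - b i| := by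
      exact Finset.sum_congr rfl fun i _ => by
        rw [← abs_mul]; congr 1; ring
    have h2 := Real.sum_mul_le_sqrt_mul_sqrt Finset.univ
      (fun i => |a i + b i|) (fun i => |a i - b i|)
    simp only [sq_abs] at h2
    rw [h1, hP]
    calc ∑ i, |a i + b i| * |a i - b i|
        ≤ Real.sqrt (∑ i, (a i + b i) ^ 2) * Real.sqrt (∑ i, (a i - b i) ^ 2) := h2
      _ = eucNorm (v + z) * eucNorm (v - z) := by
          rw [hNadd, hNsub]; rfl
  have hDval : D = ∑ i, v i ^ 2 - ∑ i, z i ^ 2 := by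
    rw [hD, Finset.sum_sub_distrib, hNv, hNz]
  -- eucNorm squared
  have hsq : ∀ w : Fin m → ℝ, eucNorm w ^ 2 = ∑ i, w i ^ 2 := by
    intro w
    exact Real.sq_sqrt (Finset.sum_nonneg fun i _ => sq_nonneg _)
  have hdisc1 : disc v z = (P + D) / 2 := by
    rw [disc, hsq, hsq, hDval, hP]; ring
  have hdisc2 : disc z v = (P - D) / 2 := by
    rw [disc, hsq, hsq, hDval, hP]
    have e1 : eucNorm (z + v) = eucNorm (v + z) := by rw [add_comm]
    have e2 : eucNorm (z - v) = eucNorm (v - z) := by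
      unfold eucNorm
      congr 1
      exact Finset.sum_congr rfl fun i _ => by
        show (z i - v i) ^ 2 = (v i - z i) ^ 2; ring
    rw [e1, e2]; ring
  -- per-term bound and summation
  have hterm : ∀ i ∈ Finset.univ,
      ((γ₁ - γm) * |a i ^ 2 - b i ^ 2| + (γ₁ + γm) * (a i ^ 2 - b i ^ 2)) / 2
        ≤ γ i * (a i ^ 2 - b i ^ 2) := by
    intro i _
    rcases abs_cases (a i ^ 2 - b i ^ 2) with ⟨h, hd⟩ | ⟨h, hd⟩ <;>
      rw [h] <;> nlinarith [hlo i, hhi i]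
  have hsum : ((γ₁ - γm) * S + (γ₁ + γm) * D) / 2 ≤ ∑ i, γ i * (a i ^ 2 - b i ^ 2) := by
    calc ((γ₁ - γm) * S + (γ₁ + γm) * D) / 2
        = ∑ i, ((γ₁ - γm) * |a i ^ 2 - b i ^ 2| + (γ₁ + γm) * (a i ^ 2 - b i ^ 2)) / 2 := by
          rw [hS, hD, Finset.mul_sum, Finset.mul_sum, ← Finset.sum_add_distrib,
            ← Finset.sum_div]
      _ ≤ _ := Finset.sum_le_sum hterm
  have hγ1m : γ₁ ≤ γm := (hlo (Classical.arbitrary _)).trans (hhi (Classical.arbitrary _))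
  rw [ge_iff_le, htr, hdisc1, hdisc2]
  have hfinal : γ₁ * ((P + D) / 2) - γm * ((P - D) / 2)
      ≤ ((γ₁ - γm) * S + (γ₁ + γm) * D) / 2 := by
    nlinarith [mul_le_mul_of_nonpos_left hSP (by linarith : γ₁ - γm ≤ 0)]
  linarith
end
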